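/- Every separable density operator ρ_AB on a finite-dimensional bipartite Hilbert space satisfies the reduction criterion: ρ_A ⊗ 1_B ≥ ρ_AB, where ρ_A = tr_B(ρ_AB). -/

import Mathlib

open Matrix BigOperators Kronecker
open scoped ComplexOrder Classical

noncomputable section

/-- Matrix logarithm via the functional calculus (spectral decomposition);
junk value `0` for non-Hermitian matrices and `Real.log 0 = 0` on the kernel. -/
def mlog {n : Type*} [Fintype n] [DecidableEq n] (A : Matrix n n ℂ) : Matrix n n ℂ :=
  if hA : A.IsHermitian then
    (hA.eigenvectorUnitary : Matrix n n ℂ) *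
      Matrix.diagonal (fun i => (Real.log (hA.eigenvalues i) : ℂ)) *
      star (hA.eigenvectorUnitary : Matrix n n ℂ)
  else 0

/-- Von Neumann entropy `S(ρ) = -tr(ρ log ρ)`. -/
def vN {n : Type*} [Fintype n] [DecidableEq n] (ρ : Matrix n n ℂ) : ℝ :=
  -((ρ * mlog ρ).trace.re)

/-- Quantum relative entropy `S(σ‖ρ) = tr(σ log σ - σ log ρ)`. -/
def relEnt {n : Type*} [Fintype n] [DecidableEq n] (σ ρ : Matrix n n ℂ) : ℝ :=
  ((σ * mlog σ).trace - (σ * mlog ρ).trace).re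

/-- Extended-real-valued relative entropy: `⊤` unless `ker ρ ⊆ ker σ`. -/
def relEntE {n : Type*} [Fintype n] [DecidableEq n] (σ ρ : Matrix n n ℂ) : EReal :=
  if ∀ x : n → ℂ, ρ *ᵥ x = 0 → σ *ᵥ x = 0 then ((relEnt σ ρ : ℝ) : EReal) else ⊤

/-- Partial trace over the second (B) factor. -/
def ptraceB {a b : Type*} [Fintype a] [Fintype b]
    (M : Matrix (a × b) (a × b) ℂ) : Matrix a a ℂ :=
  Matrix.of fun i j => ∑ k : b, M (i, k) (j, k)

/-- Partial trace over the first (A) factor. -/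
def ptraceA {a b : Type*} [Fintype a] [Fintype b]
    (M : Matrix (a × b) (a × b) ℂ) : Matrix b b ℂ :=
  Matrix.of fun i j => ∑ k : a, M (k, i) (k, j)

/-- A density operator: positive semidefinite with unit trace. -/
def IsDensity {n : Type*} [Fintype n] (ρ : Matrix n n ℂ) : Prop :=
  ρ.PosSemidef ∧ ρ.trace = 1

end

/-- A separable bipartite state: a finite convex combination of product states. -/
def IsSeparableState {a b : Type*} [Fintype a] [Fintype b]
    (ρ : Matrix (a × b) (a × b) ℂ) : Prop :=
  ∃ (k : ℕ) (p : Fin k → ℝ) (ρA : Fin k → Matrix a a ℂ) (ρB : Fin k → Matrix b b ℂ),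
    (∀ i, 0 ≤ p i) ∧ (∑ i, p i = 1) ∧ (∀ i, IsDensity (ρA i)) ∧ (∀ i, IsDensity (ρB i)) ∧
    ρ = ∑ i, ((p i : ℂ) • (ρA i ⊗ₖ ρB i))

/-! The reduction map `M ↦ tr_B M ⊗ 1 - M` is linear and sends `A ⊗ B` to `A ⊗ (tr B • 1 - B)`.
A positive semidefinite `B` satisfies `B ≤ tr B • 1`, since each eigenvalue is at most their sum,
so the reduction map is positive on products of positive semidefinite matrices, and hence on
their nonnegative combinations. -/

open scoped MatrixOrder

namespace Matrix

lemma PosSemidef.le_trace_smul_one {𝕜 n : Type*} [RCLike 𝕜] [Fintype n] [DecidableEq n]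
    {A : Matrix n n 𝕜} (hA : A.PosSemidef) : A ≤ A.trace • 1 := by
  have htrace : A.trace • (1 : Matrix n n 𝕜) = algebraMap ℝ _ (∑ i, hA.1.eigenvalues i) := by
    rw [hA.1.trace_eq_sum_eigenvalues, ← RCLike.ofReal_sum, Algebra.algebraMap_eq_smul_one,
      RCLike.real_smul_eq_coe_smul (K := 𝕜)]
  rw [htrace]
  refine le_algebraMap_of_spectrum_le fun x hx => ?_
  obtain ⟨i, rfl⟩ := hA.1.spectrum_real_eq_range_eigenvalues ▸ hx
  exact Finset.single_le_sum (fun j _ => hA.eigenvalues_nonneg j) (Finset.mem_univ i)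

end Matrix

section PartialTrace

variable {a b : Type*} [Fintype a] [Fintype b]

lemma ptraceB_add (M N : Matrix (a × b) (a × b) ℂ) :
    ptraceB (M + N) = ptraceB M + ptraceB N := by
  ext i j
  simp [ptraceB, Finset.sum_add_distrib]

lemma ptraceB_smul (c : ℂ) (M : Matrix (a × b) (a × b) ℂ) :
    ptraceB (c • M) = c • ptraceB M := by
  ext i j
  simp [ptraceB, Finset.mul_sum]

lemma ptraceB_kronecker (A : Matrix a a ℂ) (B : Matrix b b ℂ) :
    ptraceB (A ⊗ₖ B) = B.trace • A := by
  ext i j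
  simp [ptraceB, Matrix.trace, Finset.mul_sum, mul_comm]

variable [DecidableEq b]

def reductionMap : Matrix (a × b) (a × b) ℂ →ₗ[ℂ] Matrix (a × b) (a × b) ℂ where
  toFun M := ptraceB M ⊗ₖ 1 - M
  map_add' M N := by
    rw [ptraceB_add, Matrix.add_kronecker]
    abel
  map_smul' c M := by
    rw [ptraceB_smul, Matrix.smul_kronecker, RingHom.id_apply, smul_sub]

lemma reductionMap_apply (M : Matrix (a × b) (a × b) ℂ) :
    reductionMap M = ptraceB M ⊗ₖ 1 - M :=
  rfl

lemma reductionMap_kronecker (A : Matrix a a ℂ) (B : Matrix b b ℂ) :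
    reductionMap (A ⊗ₖ B) = A ⊗ₖ (B.trace • 1 - B) := by
  rw [reductionMap_apply, ptraceB_kronecker, Matrix.smul_kronecker, ← Matrix.kronecker_smul]
  ext ⟨i, k⟩ ⟨j, l⟩
  simp [mul_sub]

lemma posSemidef_reductionMap_kronecker {A : Matrix a a ℂ} {B : Matrix b b ℂ}
    (hA : A.PosSemidef) (hB : B.PosSemidef) : (reductionMap (A ⊗ₖ B)).PosSemidef := by
  rw [reductionMap_kronecker]
  exact hA.kronecker hB.le_trace_smul_one

end PartialTrace

theorem separable_reduction_general {a b : Type*}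
    [Fintype a] [Fintype b] [DecidableEq b]
    (ρ : Matrix (a × b) (a × b) ℂ) (hsep : IsSeparableState ρ) :
    (ptraceB ρ ⊗ₖ (1 : Matrix b b ℂ) - ρ).PosSemidef := by
  obtain ⟨k, p, ρA, ρB, hp, -, hA, hB, rfl⟩ := hsep
  rw [← reductionMap_apply, map_sum]
  refine Matrix.posSemidef_sum _ fun i _ => ?_
  rw [map_smul]
  exact (posSemidef_reductionMap_kronecker (hA i).1 (hB i).1).smul
    (Complex.zero_le_real.mpr (hp i))

/-- separable states satisfy the reduction criterion. -/
theorem separable_reduction {a b : Type*}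
    [Fintype a] [DecidableEq a] [Fintype b] [DecidableEq b]
    (ρ : Matrix (a × b) (a × b) ℂ) (hsep : IsSeparableState ρ) :
    (ptraceB ρ ⊗ₖ (1 : Matrix b b ℂ) - ρ).PosSemidef :=
  separable_reduction_general ρ hsep
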